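/- (Sufficiency in the main theorem, case q = p, finite lattice) Let 𝒟 be a finite collection of sets from a dyadic lattice on ℝ^n, μ and ν Borel measures finite on each Q ∈ 𝒟, p ∈ (1,∞), and (a_Q)_{Q∈𝒟} nonnegative measurable functions. Define M f(x) = (∑_{Q∈𝒟, x∈Q} ((∫_Q f dμ) a_Q(x))^p)^{1/p} for f ≥ 0. Suppose the testing condition holds: for every Q ∈ 𝒟, ‖M_Q(𝟙_Q)‖_{L^p(ν)} ≤ B·μ(Q)^{1/p}, where M_Q is the truncation of M to subcubes of Q. Then for every f ∈ L^p(μ), f ≥ 0, ‖Mf‖_{L^p(ν)} ≤ C(p)·B·‖f‖_{L^p(μ)} with C(p) = ((1+1/p)^{p+1} p)^{1/p} · p'. -/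

import Mathlib

open MeasureTheory ENNReal Set

/-- The dyadic cube of generation `k` at position `m` in `ℝⁿ`. -/
def dyadicCube (n : ℕ) (k : ℤ) (m : Fin n → ℤ) : Set (Fin n → ℝ) :=
  {x | ∀ i, (m i : ℝ) * (2 : ℝ) ^ (-k) ≤ x i ∧ x i < ((m i : ℝ) + 1) * (2 : ℝ) ^ (-k)}

/-- The generalized maximal operator with exponent `p` over a subfamily `J` of a finite
collection `D` of dyadic cubes:
`M_J f (x) = (∑_{i ∈ J, x ∈ Q_i} ((∫_{Q_i} f dμ) a_i(x))^p)^{1/p}`. -/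
noncomputable def maxOpP {n : ℕ} (μ : Measure (Fin n → ℝ))
    (J : Set (ℤ × (Fin n → ℤ))) (a : ℤ × (Fin n → ℤ) → (Fin n → ℝ) → ℝ≥0∞)
    (p : ℝ) (f : (Fin n → ℝ) → ℝ≥0∞) (x : Fin n → ℝ) : ℝ≥0∞ :=
  (∑' i : J, (Set.indicator (dyadicCube n (i : ℤ × (Fin n → ℤ)).1 (i : ℤ × (Fin n → ℤ)).2)
      (fun y => (∫⁻ z in dyadicCube n (i : ℤ × (Fin n → ℤ)).1 (i : ℤ × (Fin n → ℤ)).2, f z ∂μ) *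
        a (i : ℤ × (Fin n → ℤ)) y) x) ^ p) ^ (1 / p)

/-!
For `q = p` the operator is an `ℓ^p` sum: with `w_Q = μ(Q)^p ∫_Q a_Q^p dν` and `⟨f⟩_Q` the
`μ`-average of `f` on `Q`, `‖Mf‖_{L^p(ν)}^p = ∑_Q w_Q ⟨f⟩_Q^p`, and the testing condition says that
`w` is a Carleson sequence, `∑_{Q' ⊆ Q} w_{Q'} ≤ B^p μ(Q)`. The Carleson embedding theorem then
gives `∑_Q w_Q ⟨f⟩_Q^p ≤ B^p ‖M_μ f‖_p^p ≤ B^p (p')^p ‖f‖_p^p` for the dyadic maximal function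
`M_μ` of `μ`, and `p' ≤ C(p)`.

Both inequalities follow from a discrete layer-cake decomposition along the finitely many values
`u` of the averages. The level set `{u ≤ M_μ f}` is the disjoint union of the maximal cubes with
average at least `u`; summing over them the Carleson condition, respectively `u μ(Q) ≤ ∫_Q f`,
gives the first inequality, respectively a weak-type bound that yields the second through
`u^p - v^p ≤ p' u (u^(p-1) - v^(p-1))` and Hölder's inequality.
-/

theorem mem_dyadicCube_iff {n : ℕ} {k : ℤ} {m : Fin n → ℤ} {x : Fin n → ℝ} :
    x ∈ dyadicCube n k m ↔ ∀ i, ⌊x i * 2 ^ k⌋ = m i := by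
  have h2 : (0 : ℝ) < 2 ^ k := by positivity
  simp only [dyadicCube, mem_ofPred_eq, Int.floor_eq_iff, zpow_neg, mul_inv_le_iff₀ h2,
    lt_mul_inv_iff₀ h2]

theorem floor_mul_two_zpow_of_le {k k' : ℤ} (hk : k ≤ k') (y : ℝ) :
    ⌊y * 2 ^ k⌋ = ⌊y * 2 ^ k'⌋ / ((2 ^ (k' - k).toNat : ℕ) : ℤ) := by
  rw [← Int.floor_div_natCast]
  congr 1
  push_cast
  rw [← zpow_natCast, Int.toNat_of_nonneg (by omega), mul_div_assoc, ← zpow_sub₀ two_ne_zero]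
  ring_nf

theorem dyadicCube_subset_of_le {n : ℕ} {k k' : ℤ} {m m' : Fin n → ℤ} (hk : k ≤ k')
    (h : (dyadicCube n k m ∩ dyadicCube n k' m').Nonempty) :
    dyadicCube n k' m' ⊆ dyadicCube n k m := by
  obtain ⟨x, hx, hx'⟩ := h
  intro y hy
  rw [mem_dyadicCube_iff] at hx hx' hy ⊢
  intro i
  rw [← hx i, floor_mul_two_zpow_of_le hk, floor_mul_two_zpow_of_le hk, hx' i, hy i]

theorem dyadicCube_subset_or_subset_or_disjoint (n : ℕ) (i j : ℤ × (Fin n → ℤ)) :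
    dyadicCube n i.1 i.2 ⊆ dyadicCube n j.1 j.2 ∨ dyadicCube n j.1 j.2 ⊆ dyadicCube n i.1 i.2 ∨
      Disjoint (dyadicCube n i.1 i.2) (dyadicCube n j.1 j.2) := by
  by_cases h : (dyadicCube n i.1 i.2 ∩ dyadicCube n j.1 j.2).Nonempty
  · rcases le_total i.1 j.1 with hk | hk
    · exact .inr (.inl (dyadicCube_subset_of_le hk h))
    · exact .inl (dyadicCube_subset_of_le hk (inter_comm _ _ ▸ h))
  · exact .inr (.inr (disjoint_iff_inter_eq_empty.2 (not_nonempty_iff_eq_empty.1 h)))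

theorem measurableSet_dyadicCube (n : ℕ) (k : ℤ) (m : Fin n → ℤ) :
    MeasurableSet (dyadicCube n k m) := by
  have : dyadicCube n k m = univ.pi fun i ↦ Ico ((m i : ℝ) * 2 ^ (-k)) ((m i + 1) * 2 ^ (-k)) := by
    ext x
    simp [dyadicCube]
  exact this ▸ .univ_pi fun _ ↦ measurableSet_Ico

section LevelIncrement

variable {α β : Type*} [LinearOrder α] [OrderBot α] [AddCommMonoid β] [PartialOrder β]
  [CanonicallyOrderedAdd β] [Sub β] [OrderedSub β]

/-- `(V.filter (· < u)).sup id` is the predecessor of `u` in `V`, or `⊥` for the least element. -/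
def levelIncrement (V : Finset α) (φ : α → β) (u : α) : β :=
  φ u - φ ((V.filter (· < u)).sup id)

theorem sum_levelIncrement_filter_le {φ : α → β} (hφ : Monotone φ) (hφ0 : φ ⊥ = 0)
    (V : Finset α) (t : α) :
    ∑ u ∈ V with u ≤ t, levelIncrement V φ u = φ ((V.filter (· ≤ t)).sup id) := by
  classical
  induction V using Finset.induction_on_max generalizing t with
  | empty => simp [hφ0]
  | insert a s ha ih =>
    have hinc : ∀ u ∈ s, levelIncrement (insert a s) φ u = levelIncrement s φ u := fun u hu ↦ by
      simp [levelIncrement, Finset.filter_insert, (ha u hu).not_gt]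
    by_cases hat : a ≤ t
    · have hs : s.filter (· ≤ t) = s :=
        Finset.filter_true_of_mem fun u hu ↦ (ha u hu).le.trans hat
      have hsa : (insert a s).filter (· < a) = s := by
        rw [Finset.filter_insert, if_neg (lt_irrefl a), Finset.filter_true_of_mem ha]
      have hsup : s.sup id ≤ a := Finset.sup_le fun u hu ↦ (ha u hu).le
      rw [Finset.filter_insert, if_pos hat,
        Finset.sum_insert fun h ↦ lt_irrefl a (ha a (Finset.mem_filter.1 h).1),
        Finset.sum_congr rfl fun u hu ↦ hinc u (Finset.filter_subset _ _ hu), ih, hs,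
        levelIncrement, hsa, tsub_add_cancel_of_le (hφ hsup), Finset.sup_insert, id,
        sup_eq_left.2 hsup]
    · rw [Finset.filter_insert, if_neg hat,
        Finset.sum_congr rfl fun u hu ↦ hinc u (Finset.filter_subset _ _ hu), ih]

theorem sum_levelIncrement_filter_le_of_mem {φ : α → β} (hφ : Monotone φ) (hφ0 : φ ⊥ = 0)
    {V : Finset α} {t : α} (ht : t ∈ V) :
    ∑ u ∈ V with u ≤ t, levelIncrement V φ u = φ t := by
  rw [sum_levelIncrement_filter_le hφ hφ0]
  congr 1
  exact le_antisymm (Finset.sup_le fun u hu ↦ (Finset.mem_filter.1 hu).2)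
      (Finset.le_sup (f := id) (Finset.mem_filter.2 ⟨ht, le_rfl⟩))

end LevelIncrement

theorem Real.rpow_sub_rpow_le_conjExponent_mul {p : ℝ} (hp : 1 < p) {a b : ℝ} (ha : 0 ≤ a)
    (hb : 0 ≤ b) : a ^ p - b ^ p ≤ p / (p - 1) * (a * (a ^ (p - 1) - b ^ (p - 1))) := by
  have hp0 : 0 < p := by linarith
  have amgm : a * b ^ (p - 1) ≤ 1 / p * a ^ p + (1 - 1 / p) * b ^ p := by
    have := Real.geom_mean_le_arith_mean2_weighted (by positivity)
      (sub_nonneg.2 ((div_le_one hp0).2 hp.le)) (Real.rpow_nonneg ha p) (Real.rpow_nonneg hb p)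
      (add_sub_cancel (1 / p) 1)
    rwa [← Real.rpow_mul ha, ← Real.rpow_mul hb, mul_one_div_cancel hp0.ne', Real.rpow_one,
      mul_sub, mul_one, mul_one_div_cancel hp0.ne'] at this
  have hap : a ^ p = a * a ^ (p - 1) := by
    conv_lhs => rw [← add_sub_cancel 1 p, Real.rpow_add' ha (by linarith), Real.rpow_one]
  rw [mul_sub, ← hap, div_mul_eq_mul_div, le_div_iff₀ (by linarith)]
  field_simp at amgm
  nlinarith

theorem ENNReal.rpow_sub_rpow_le_conjExponent_mul {p : ℝ} (hp : 1 < p) {u v : ℝ≥0∞}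
    (hu : u ≠ ∞) (hv : v ≠ ∞) :
    u ^ p - v ^ p ≤ ENNReal.ofReal (p / (p - 1)) * (u * (u ^ (p - 1) - v ^ (p - 1))) := by
  rw [← ofReal_toReal hu, ← ofReal_toReal hv]
  have hu0 := toReal_nonneg (a := u)
  have hv0 := toReal_nonneg (a := v)
  rw [ofReal_rpow_of_nonneg hu0 (by linarith), ofReal_rpow_of_nonneg hv0 (by linarith),
    ofReal_rpow_of_nonneg hu0 (by linarith), ofReal_rpow_of_nonneg hv0 (by linarith),
    ← ofReal_sub _ (by positivity), ← ofReal_sub _ (by positivity), ← ofReal_mul hu0,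
    ← ofReal_mul (div_nonneg (by linarith) (by linarith))]
  exact ofReal_le_ofReal (Real.rpow_sub_rpow_le_conjExponent_mul hp hu0 hv0)

section NestedFamily

variable {X ι : Type*} {T : Finset ι} {Q : ι → Set X}

theorem exists_pairwiseDisjoint_maximal_cover
    (hQ : ∀ i ∈ T, ∀ j ∈ T, Q i ⊆ Q j ∨ Q j ⊆ Q i ∨ Disjoint (Q i) (Q j)) :
    ∃ C ⊆ T.image Q, (C : Set (Set X)).PairwiseDisjoint id ∧
      (∀ i ∈ T, ∃ c ∈ C, Q i ⊆ c) ∧ ⋃ c ∈ C, id c = ⋃ i ∈ T, Q i := by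
  classical
  set C := (T.image Q).filter (Maximal (· ∈ T.image Q))
  have hcover : ∀ i ∈ T, ∃ c ∈ C, Q i ⊆ c := fun i hi ↦ by
    obtain ⟨c, hic, hc⟩ := (T.image Q).exists_le_maximal (Finset.mem_image_of_mem Q hi)
    exact ⟨c, Finset.mem_filter.2 ⟨hc.1, hc⟩, hic⟩
  refine ⟨C, Finset.filter_subset _ _, ?_, hcover, ?_⟩
  · intro c hc c' hc' hne
    simp only [C, Finset.coe_filter, Finset.mem_image, mem_ofPred_eq] at hc hc'
    obtain ⟨⟨i, hi, rfl⟩, hmax⟩ := hc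
    obtain ⟨⟨j, hj, rfl⟩, hmax'⟩ := hc'
    rcases hQ i hi j hj with h | h | h
    · exact absurd (h.antisymm (hmax.2 hmax'.1 h)) hne
    · exact absurd ((hmax'.2 hmax.1 h).antisymm h) hne
    · exact h
  · refine subset_antisymm (iUnion₂_subset fun c hc ↦ ?_) (iUnion₂_subset fun i hi ↦ ?_)
    · obtain ⟨i, hi, rfl⟩ := Finset.mem_image.1 (Finset.filter_subset _ _ hc)
      exact subset_biUnion_of_mem (u := Q) hi
    · obtain ⟨c, hc, hic⟩ := hcover i hi
      exact hic.trans (subset_biUnion_of_mem (u := id) hc)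

variable [MeasurableSpace X] {μ : Measure X}

open scoped Classical in
theorem sum_le_mul_measure_biUnion {S : Finset ι} (hTS : T ⊆ S)
    (hQ : ∀ i ∈ S, ∀ j ∈ S, Q i ⊆ Q j ∨ Q j ⊆ Q i ∨ Disjoint (Q i) (Q j))
    (hQm : ∀ i ∈ S, MeasurableSet (Q i)) {w : ι → ℝ≥0∞} {B : ℝ≥0∞}
    (hCar : ∀ i ∈ S, ∑ j ∈ S with Q j ⊆ Q i, w j ≤ B * μ (Q i)) :
    ∑ i ∈ T, w i ≤ B * μ (⋃ i ∈ T, Q i) := by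
  classical
  obtain ⟨C, hCT, hdisj, hcover, hunion⟩ :=
    exists_pairwiseDisjoint_maximal_cover fun i hi j hj ↦ hQ i (hTS hi) j (hTS hj)
  have hCQ : ∀ c ∈ C, ∃ i ∈ T, Q i = c := fun c hc ↦ Finset.mem_image.1 (hCT hc)
  choose! σ hσC hσ using hcover
  rw [← hunion, measure_biUnion_finset hdisj fun c hc ↦ ?_, Finset.mul_sum,
    ← Finset.sum_fiberwise_of_maps_to hσC]
  · refine Finset.sum_le_sum fun c hc ↦ ?_
    obtain ⟨j, hj, rfl⟩ := hCQ c hc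
    refine le_trans (Finset.sum_le_sum_of_subset fun i hi ↦ ?_) (hCar j (hTS hj))
    obtain ⟨hiT, hσi⟩ := Finset.mem_filter.1 hi
    exact Finset.mem_filter.2 ⟨hTS hiT, hσi ▸ hσ i hiT⟩
  · obtain ⟨i, hi, rfl⟩ := hCQ c hc
    exact hQm i (hTS hi)

theorem mul_measure_biUnion_le_setLIntegral
    (hQ : ∀ i ∈ T, ∀ j ∈ T, Q i ⊆ Q j ∨ Q j ⊆ Q i ∨ Disjoint (Q i) (Q j))
    (hQm : ∀ i ∈ T, MeasurableSet (Q i)) {f : X → ℝ≥0∞} {u : ℝ≥0∞}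
    (hu : ∀ i ∈ T, u * μ (Q i) ≤ ∫⁻ x in Q i, f x ∂μ) :
    u * μ (⋃ i ∈ T, Q i) ≤ ∫⁻ x in ⋃ i ∈ T, Q i, f x ∂μ := by
  obtain ⟨C, hCT, hdisj, -, hunion⟩ := exists_pairwiseDisjoint_maximal_cover hQ
  have hCQ : ∀ c ∈ C, ∃ i ∈ T, Q i = c := fun c hc ↦ Finset.mem_image.1 (hCT hc)
  have hCm : ∀ c ∈ C, MeasurableSet c := fun c hc ↦ by
    obtain ⟨i, hi, rfl⟩ := hCQ c hc
    exact hQm i hi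
  rw [← hunion, measure_biUnion_finset hdisj hCm, lintegral_biUnion_finset hdisj hCm,
    Finset.mul_sum]
  refine Finset.sum_le_sum fun c hc ↦ ?_
  obtain ⟨i, hi, rfl⟩ := hCQ c hc
  exact hu i hi

end NestedFamily

theorem ENNReal.le_rpow_of_le_mul_rpow_holderConjugate {p q : ℝ} (hpq : p.HolderConjugate q)
    {I K : ℝ≥0∞} (hI : I ≠ ∞) (h : I ≤ K * I ^ (1 / q)) : I ≤ K ^ p := by
  rcases eq_or_ne I 0 with rfl | hI0
  · exact zero_le
  have hIq0 : I ^ (1 / q) ≠ 0 := (rpow_pos (pos_iff_ne_zero.2 hI0) hI).ne'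
  have hIq : I ^ (1 / q) ≠ ∞ := rpow_ne_top_of_nonneg (by simpa using hpq.symm.nonneg) hI
  have hsplit : I ^ (1 / p) * I ^ (1 / q) = I := by
    rw [← rpow_add _ _ hI0 hI, one_div, one_div, hpq.inv_add_inv_eq_one, rpow_one]
  rw [← rpow_inv_le_iff hpq.pos, ← one_div, ← ENNReal.mul_le_mul_iff_left hIq0 hIq, hsplit]
  exact h

theorem setLIntegral_ne_top_of_lintegral_rpow_ne_top {X : Type*} [MeasurableSpace X]
    {μ : Measure X} {f : X → ℝ≥0∞} {p : ℝ} (hp : 1 ≤ p) {s : Set X} (hs : μ s ≠ ∞)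
    (hf : ∫⁻ x, f x ^ p ∂μ ≠ ∞) : ∫⁻ x in s, f x ∂μ ≠ ∞ := by
  have hle : ∀ x, f x ≤ 1 + f x ^ p := fun x ↦ by
    rcases le_total (f x) 1 with h | h
    · exact h.trans le_self_add
    · calc f x = f x ^ (1 : ℝ) := (rpow_one _).symm
        _ ≤ f x ^ p := rpow_le_rpow_of_exponent_le h hp
        _ ≤ 1 + f x ^ p := le_add_self
  refine ne_top_of_le_ne_top ?_ (lintegral_mono hle)
  rw [lintegral_add_left measurable_const, setLIntegral_const, one_mul]
  exact add_ne_top.2 ⟨hs, ne_top_of_le_ne_top hf (setLIntegral_le_lintegral _ _)⟩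

section MaximalAverage

variable {X ι : Type*} [MeasurableSpace X] {μ : Measure X} {S : Finset ι} {Q : ι → Set X}
  {f : X → ℝ≥0∞}

noncomputable def maximalAverage (μ : Measure X) (S : Finset ι) (Q : ι → Set X) (f : X → ℝ≥0∞) :
    X → ℝ≥0∞ :=
  S.sup fun i ↦ (Q i).indicator fun _ ↦ ⨍⁻ y in Q i, f y ∂μ

theorem maximalAverage_apply (x : X) :
    maximalAverage μ S Q f x = S.sup fun i ↦ (Q i).indicator (fun _ ↦ ⨍⁻ y in Q i, f y ∂μ) x :=
  Finset.sup_apply _ _ _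

theorem measurable_maximalAverage (hQm : ∀ i ∈ S, MeasurableSet (Q i)) :
    Measurable (maximalAverage μ S Q f) :=
  Finset.sup_induction measurable_const (fun _ h₁ _ h₂ ↦ h₁.sup h₂)
    fun i hi ↦ measurable_const.indicator (hQm i hi)

theorem maximalAverage_mem_insert_zero (x : X) :
    maximalAverage μ S Q f x ∈ insert 0 (S.image fun i ↦ ⨍⁻ y in Q i, f y ∂μ) := by
  classical
  rcases S.eq_empty_or_nonempty with rfl | hS
  · simp [maximalAverage]
  obtain ⟨i, hi, h⟩ :=
    S.exists_mem_eq_sup hS fun i ↦ (Q i).indicator (fun _ ↦ ⨍⁻ y in Q i, f y ∂μ) x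
  rw [maximalAverage_apply, h]
  by_cases hx : x ∈ Q i
  · simp [hx, Finset.mem_image_of_mem _ hi]
  · simp [hx]

theorem biUnion_subset_setOf_le_maximalAverage (u : ℝ≥0∞) :
    ⋃ i ∈ S.filter (fun i ↦ u ≤ ⨍⁻ y in Q i, f y ∂μ), Q i ⊆ {x | u ≤ maximalAverage μ S Q f x} := by
  refine iUnion₂_subset fun i hi x hx ↦ ?_
  obtain ⟨hiS, hu⟩ := Finset.mem_filter.1 hi
  rw [mem_ofPred_eq, maximalAverage_apply]
  refine hu.trans (le_of_eq_of_le (indicator_of_mem hx fun _ ↦ ⨍⁻ y in Q i, f y ∂μ).symm ?_)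
  exact Finset.le_sup (f := fun i ↦ (Q i).indicator (fun _ ↦ ⨍⁻ y in Q i, f y ∂μ) x) hiS

theorem setOf_le_maximalAverage_subset_biUnion {u : ℝ≥0∞} (hu : u ≠ 0) :
    {x | u ≤ maximalAverage μ S Q f x} ⊆ ⋃ i ∈ S.filter (fun i ↦ u ≤ ⨍⁻ y in Q i, f y ∂μ), Q i := by
  intro x hx
  rw [mem_ofPred_eq, maximalAverage_apply, Finset.le_sup_iff (pos_iff_ne_zero.2 hu)] at hx
  obtain ⟨i, hi, h⟩ := hx
  by_cases hxi : x ∈ Q i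
  · rw [indicator_of_mem hxi] at h
    exact mem_biUnion (Finset.mem_filter.2 ⟨hi, h⟩) hxi
  · rw [indicator_of_notMem hxi, nonpos_iff_eq_zero] at h
    exact absurd h hu

theorem mul_measure_setOf_le_maximalAverage_le
    (hQ : ∀ i ∈ S, ∀ j ∈ S, Q i ⊆ Q j ∨ Q j ⊆ Q i ∨ Disjoint (Q i) (Q j))
    (hQm : ∀ i ∈ S, MeasurableSet (Q i)) (hQfin : ∀ i ∈ S, μ (Q i) ≠ ∞) (u : ℝ≥0∞) :
    u * μ {x | u ≤ maximalAverage μ S Q f x} ≤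
      ∫⁻ x in {x | u ≤ maximalAverage μ S Q f x}, f x ∂μ := by
  rcases eq_or_ne u 0 with rfl | hu
  · simp
  rw [(setOf_le_maximalAverage_subset_biUnion hu).antisymm
    (biUnion_subset_setOf_le_maximalAverage u)]
  refine mul_measure_biUnion_le_setLIntegral
    (fun i hi j hj ↦ hQ i (Finset.mem_filter.1 hi).1 j (Finset.mem_filter.1 hj).1)
    (fun i hi ↦ hQm i (Finset.mem_filter.1 hi).1) fun i hi ↦ ?_
  obtain ⟨hiS, hui⟩ := Finset.mem_filter.1 hi
  calc u * μ (Q i) ≤ μ (Q i) * ⨍⁻ y in Q i, f y ∂μ := by rw [mul_comm]; gcongr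
    _ = ∫⁻ x in Q i, f x ∂μ := measure_mul_setLAverage f (hQfin i hiS)

theorem lintegral_mul_comp_maximalAverage {φ : ℝ≥0∞ → ℝ≥0∞} (hφ : Monotone φ) (hφ0 : φ 0 = 0)
    (hQm : ∀ i ∈ S, MeasurableSet (Q i)) {g : X → ℝ≥0∞} (hg : Measurable g) :
    ∫⁻ x, g x * φ (maximalAverage μ S Q f x) ∂μ =
      ∑ u ∈ insert 0 (S.image fun i ↦ ⨍⁻ y in Q i, f y ∂μ),
        levelIncrement (insert 0 (S.image fun i ↦ ⨍⁻ y in Q i, f y ∂μ)) φ u *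
          ∫⁻ x in {x | u ≤ maximalAverage μ S Q f x}, g x ∂μ := by
  set V := insert 0 (S.image fun i ↦ ⨍⁻ y in Q i, f y ∂μ)
  have hE : ∀ u, MeasurableSet {x | u ≤ maximalAverage μ S Q f x} := fun u ↦
    measurableSet_le measurable_const (measurable_maximalAverage hQm)
  have hpt : ∀ x, g x * φ (maximalAverage μ S Q f x) =
      ∑ u ∈ V, levelIncrement V φ u * {x | u ≤ maximalAverage μ S Q f x}.indicator g x := by
    intro x
    rw [← sum_levelIncrement_filter_le_of_mem hφ hφ0 (maximalAverage_mem_insert_zero x),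
      Finset.mul_sum, Finset.sum_filter]
    refine Finset.sum_congr rfl fun u _ ↦ ?_
    by_cases hu : u ≤ maximalAverage μ S Q f x
    · rw [if_pos hu, indicator_of_mem (show x ∈ {x | u ≤ maximalAverage μ S Q f x} from hu),
        mul_comm]
    · rw [if_neg hu, indicator_of_notMem (show x ∉ {x | u ≤ maximalAverage μ S Q f x} from hu),
        mul_zero]
  rw [lintegral_congr hpt, lintegral_finsetSum _ fun u _ ↦ (hg.indicator (hE u)).const_mul _]
  exact Finset.sum_congr rfl fun u _ ↦ by rw [lintegral_const_mul _ (hg.indicator (hE u)),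
    lintegral_indicator (hE u)]

theorem lintegral_comp_maximalAverage {φ : ℝ≥0∞ → ℝ≥0∞} (hφ : Monotone φ) (hφ0 : φ 0 = 0)
    (hQm : ∀ i ∈ S, MeasurableSet (Q i)) :
    ∫⁻ x, φ (maximalAverage μ S Q f x) ∂μ =
      ∑ u ∈ insert 0 (S.image fun i ↦ ⨍⁻ y in Q i, f y ∂μ),
        levelIncrement (insert 0 (S.image fun i ↦ ⨍⁻ y in Q i, f y ∂μ)) φ u *
          μ {x | u ≤ maximalAverage μ S Q f x} := by
  simpa using lintegral_mul_comp_maximalAverage hφ hφ0 hQm (g := 1) measurable_const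

open scoped Classical in
theorem sum_mul_setLAverage_rpow_le {p : ℝ} (hp : 0 < p)
    (hQ : ∀ i ∈ S, ∀ j ∈ S, Q i ⊆ Q j ∨ Q j ⊆ Q i ∨ Disjoint (Q i) (Q j))
    (hQm : ∀ i ∈ S, MeasurableSet (Q i)) {w : ι → ℝ≥0∞} {B : ℝ≥0∞}
    (hCar : ∀ i ∈ S, ∑ j ∈ S with Q j ⊆ Q i, w j ≤ B * μ (Q i)) :
    ∑ i ∈ S, w i * (⨍⁻ x in Q i, f x ∂μ) ^ p ≤
      B * ∫⁻ x, maximalAverage μ S Q f x ^ p ∂μ := by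
  set avg := fun i ↦ ⨍⁻ y in Q i, f y ∂μ
  set V := insert 0 (S.image avg)
  set c := levelIncrement V fun t : ℝ≥0∞ ↦ t ^ p
  have hφ : Monotone fun t : ℝ≥0∞ ↦ t ^ p := monotone_rpow_of_nonneg hp.le
  calc ∑ i ∈ S, w i * avg i ^ p = ∑ i ∈ S, w i * ∑ u ∈ V with u ≤ avg i, c u :=
        Finset.sum_congr rfl fun i hi ↦ by rw [sum_levelIncrement_filter_le_of_mem hφ
          (zero_rpow_of_pos hp) (Finset.mem_insert_of_mem (Finset.mem_image_of_mem avg hi))]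
    _ = ∑ u ∈ V, c u * ∑ i ∈ S with u ≤ avg i, w i := by
        simp only [Finset.mul_sum, Finset.sum_filter]
        rw [Finset.sum_comm]
        refine Finset.sum_congr rfl fun u _ ↦ Finset.sum_congr rfl fun i _ ↦ ?_
        split_ifs <;> simp [mul_comm]
    _ ≤ ∑ u ∈ V, c u * (B * μ {x | u ≤ maximalAverage μ S Q f x}) := by
        gcongr with u
        exact (sum_le_mul_measure_biUnion (Finset.filter_subset _ S) hQ hQm hCar).trans
          (by gcongr; exact biUnion_subset_setOf_le_maximalAverage u)
    _ = B * ∫⁻ x, maximalAverage μ S Q f x ^ p ∂μ := by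
        rw [lintegral_comp_maximalAverage hφ (zero_rpow_of_pos hp) hQm, Finset.mul_sum]
        exact Finset.sum_congr rfl fun u _ ↦ by ring

theorem lintegral_maximalAverage_rpow_ne_top {p : ℝ} (hp : 0 < p)
    (hQm : ∀ i ∈ S, MeasurableSet (Q i)) (hQfin : ∀ i ∈ S, μ (Q i) ≠ ∞)
    (havg : ∀ i ∈ S, ⨍⁻ x in Q i, f x ∂μ ≠ ∞) :
    ∫⁻ x, maximalAverage μ S Q f x ^ p ∂μ ≠ ∞ := by
  rw [lintegral_comp_maximalAverage (monotone_rpow_of_nonneg hp.le) (zero_rpow_of_pos hp) hQm]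
  refine (ENNReal.sum_lt_top.2 fun u hu ↦ ?_).ne
  rcases eq_or_ne u 0 with rfl | hu0
  · simp [levelIncrement, zero_rpow_of_pos hp]
  obtain ⟨i, hi, rfl⟩ := Finset.mem_image.1 ((Finset.mem_insert.1 hu).resolve_left hu0)
  refine mul_lt_top (tsub_le_self.trans_lt (rpow_lt_top_of_nonneg hp.le (havg i hi)))
    ((measure_mono (setOf_le_maximalAverage_subset_biUnion hu0)).trans_lt ?_)
  exact measure_biUnion_lt_top (Finset.finite_toSet _)
    fun j hj ↦ (hQfin j (Finset.mem_filter.1 hj).1).lt_top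

theorem lintegral_maximalAverage_rpow_le_mul_lintegral {p : ℝ} (hp : 1 < p)
    (hQ : ∀ i ∈ S, ∀ j ∈ S, Q i ⊆ Q j ∨ Q j ⊆ Q i ∨ Disjoint (Q i) (Q j))
    (hQm : ∀ i ∈ S, MeasurableSet (Q i)) (hQfin : ∀ i ∈ S, μ (Q i) ≠ ∞)
    (havg : ∀ i ∈ S, ⨍⁻ x in Q i, f x ∂μ ≠ ∞) (hf : Measurable f) :
    ∫⁻ x, maximalAverage μ S Q f x ^ p ∂μ ≤
      ENNReal.ofReal (p / (p - 1)) * ∫⁻ x, f x * maximalAverage μ S Q f x ^ (p - 1) ∂μ := by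
  have hp0 : 0 < p := by linarith
  have hp1 : 0 < p - 1 := by linarith
  set M := maximalAverage μ S Q f
  set V := insert 0 (S.image fun i ↦ ⨍⁻ y in Q i, f y ∂μ)
  set P := ENNReal.ofReal (p / (p - 1))
  set c := levelIncrement V fun t : ℝ≥0∞ ↦ t ^ p
  set d := levelIncrement V fun t : ℝ≥0∞ ↦ t ^ (p - 1)
  have hcd : ∀ u ∈ V, c u ≤ P * (u * d u) := fun u hu ↦ by
    have hu_top : u ≠ ∞ := by
      rcases Finset.mem_insert.1 hu with rfl | hu
      · exact zero_ne_top
      · obtain ⟨i, hi, rfl⟩ := Finset.mem_image.1 hu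
        exact havg i hi
    exact rpow_sub_rpow_le_conjExponent_mul hp hu_top
      (ne_top_of_le_ne_top hu_top (Finset.sup_le fun v hv ↦ (Finset.mem_filter.1 hv).2.le))
  calc ∫⁻ x, M x ^ p ∂μ = ∑ u ∈ V, c u * μ {x | u ≤ M x} :=
        lintegral_comp_maximalAverage (monotone_rpow_of_nonneg hp0.le) (zero_rpow_of_pos hp0) hQm
    _ ≤ ∑ u ∈ V, P * d u * (u * μ {x | u ≤ M x}) := by
        refine Finset.sum_le_sum fun u hu ↦ ?_
        calc c u * μ {x | u ≤ M x} ≤ P * (u * d u) * μ {x | u ≤ M x} := by gcongr; exact hcd u hu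
          _ = P * d u * (u * μ {x | u ≤ M x}) := by ring
    _ ≤ ∑ u ∈ V, P * d u * ∫⁻ x in {x | u ≤ M x}, f x ∂μ := by
        gcongr with u
        exact mul_measure_setOf_le_maximalAverage_le hQ hQm hQfin u
    _ = P * ∫⁻ x, f x * M x ^ (p - 1) ∂μ := by
        rw [lintegral_mul_comp_maximalAverage (monotone_rpow_of_nonneg hp1.le)
          (zero_rpow_of_pos hp1) hQm hf, Finset.mul_sum]
        exact Finset.sum_congr rfl fun u _ ↦ by ring

theorem lintegral_maximalAverage_rpow_le {p : ℝ} (hp : 1 < p)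
    (hQ : ∀ i ∈ S, ∀ j ∈ S, Q i ⊆ Q j ∨ Q j ⊆ Q i ∨ Disjoint (Q i) (Q j))
    (hQm : ∀ i ∈ S, MeasurableSet (Q i)) (hQfin : ∀ i ∈ S, μ (Q i) ≠ ∞) (hf : Measurable f)
    (hfp : ∫⁻ x, f x ^ p ∂μ ≠ ∞) :
    ∫⁻ x, maximalAverage μ S Q f x ^ p ∂μ ≤
      ENNReal.ofReal (p / (p - 1)) ^ p * ∫⁻ x, f x ^ p ∂μ := by
  have hp0 : 0 < p := by linarith
  have hp1 : 0 < p - 1 := by linarith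
  set M := maximalAverage μ S Q f
  have hM : Measurable M := measurable_maximalAverage hQm
  have havg : ∀ i ∈ S, ⨍⁻ x in Q i, f x ∂μ ≠ ∞ := fun i hi ↦
    (setLAverage_lt_top (setLIntegral_ne_top_of_lintegral_rpow_ne_top hp.le (hQfin i hi) hfp)).ne
  have hconj : p.HolderConjugate (p / (p - 1)) := .conjExponent hp
  have holder : ∫⁻ x, f x * M x ^ (p - 1) ∂μ ≤
      (∫⁻ x, f x ^ p ∂μ) ^ (1 / p) * (∫⁻ x, M x ^ p ∂μ) ^ (1 / (p / (p - 1))) := by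
    have hpow : ∀ x, (M x ^ (p - 1)) ^ (p / (p - 1)) = M x ^ p := fun x ↦ by
      rw [← rpow_mul, mul_div_cancel₀ _ hp1.ne']
    simpa only [Pi.mul_apply, hpow] using lintegral_mul_le_Lp_mul_Lq μ hconj hf.aemeasurable
      (hM.pow_const (p - 1)).aemeasurable
  refine (le_rpow_of_le_mul_rpow_holderConjugate hconj
    (lintegral_maximalAverage_rpow_ne_top hp0 hQm hQfin havg)
    ((lintegral_maximalAverage_rpow_le_mul_lintegral hp hQ hQm hQfin havg hf).trans
      (by gcongr) |>.trans_eq (mul_assoc _ _ _).symm)).trans_eq ?_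
  rw [mul_rpow_of_nonneg _ _ hp0.le, ← rpow_mul, one_div_mul_cancel hp0.ne', rpow_one]

end MaximalAverage

theorem lintegral_maxOpP_rpow {n : ℕ} (μ ν : Measure (Fin n → ℝ)) (s : Finset (ℤ × (Fin n → ℤ)))
    {a : ℤ × (Fin n → ℤ) → (Fin n → ℝ) → ℝ≥0∞} (ha : ∀ i ∈ s, Measurable (a i)) {p : ℝ}
    (hp : 0 < p) (f : (Fin n → ℝ) → ℝ≥0∞) :
    ∫⁻ x, maxOpP μ s a p f x ^ p ∂ν =
      ∑ i ∈ s, (∫⁻ z in dyadicCube n i.1 i.2, f z ∂μ) ^ p *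
        ∫⁻ x in dyadicCube n i.1 i.2, a i x ^ p ∂ν := by
  have hpt : ∀ x, maxOpP μ s a p f x ^ p = ∑ i ∈ s, (dyadicCube n i.1 i.2).indicator
      (fun y ↦ (∫⁻ z in dyadicCube n i.1 i.2, f z ∂μ) ^ p * a i y ^ p) x := fun x ↦ by
    rw [maxOpP, ← rpow_mul, one_div_mul_cancel hp.ne', rpow_one]
    refine (Finset.tsum_subtype s fun i ↦ ((dyadicCube n i.1 i.2).indicator
      (fun y ↦ (∫⁻ z in dyadicCube n i.1 i.2, f z ∂μ) * a i y) x) ^ p).trans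
      (Finset.sum_congr rfl fun i _ ↦ ?_)
    by_cases hx : x ∈ dyadicCube n i.1 i.2
    · simp only [indicator_of_mem hx, mul_rpow_of_nonneg _ _ hp.le]
    · simp only [indicator_of_notMem hx, zero_rpow_of_pos hp]
  have hm : ∀ i ∈ s, Measurable fun y ↦ a i y ^ p := fun i hi ↦ (ha i hi).pow_const p
  rw [lintegral_congr hpt, lintegral_finsetSum _ fun i hi ↦
    ((hm i hi).const_mul _).indicator (measurableSet_dyadicCube n i.1 i.2)]
  refine Finset.sum_congr rfl fun i hi ↦ ?_
  rw [lintegral_indicator (measurableSet_dyadicCube n i.1 i.2), lintegral_const_mul _ (hm i hi)]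

open scoped Classical in
theorem sum_measure_rpow_mul_le_of_testing {n : ℕ} {μ ν : Measure (Fin n → ℝ)}
    {D : Finset (ℤ × (Fin n → ℤ))} {a : ℤ × (Fin n → ℤ) → (Fin n → ℝ) → ℝ≥0∞}
    (ha : ∀ j ∈ D, Measurable (a j)) {p : ℝ} (hp : 0 < p) {B : ℝ≥0∞} {i : ℤ × (Fin n → ℤ)}
    (hTest : (∫⁻ x, (maxOpP μ {j | j ∈ D ∧ dyadicCube n j.1 j.2 ⊆ dyadicCube n i.1 i.2} a p
          ((dyadicCube n i.1 i.2).indicator 1) x) ^ p ∂ν) ^ (1 / p) ≤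
        B * μ (dyadicCube n i.1 i.2) ^ (1 / p)) :
    ∑ j ∈ D with dyadicCube n j.1 j.2 ⊆ dyadicCube n i.1 i.2,
        μ (dyadicCube n j.1 j.2) ^ p * ∫⁻ x in dyadicCube n j.1 j.2, a j x ^ p ∂ν ≤
      B ^ p * μ (dyadicCube n i.1 i.2) := by
  have hQi := measurableSet_dyadicCube n i.1 i.2
  rw [← Finset.coe_filter, lintegral_maxOpP_rpow μ ν _
    (fun j hj ↦ ha j (Finset.mem_filter.1 hj).1) hp, one_div, rpow_inv_le_iff hp,
    mul_rpow_of_nonneg _ _ hp.le, rpow_inv_rpow hp.ne'] at hTest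
  refine le_of_eq_of_le (Finset.sum_congr rfl fun j hj ↦ ?_) hTest
  rw [lintegral_indicator_one hQi, Measure.restrict_apply hQi,
    inter_eq_right.2 (Finset.mem_filter.1 hj).2]

theorem div_sub_one_le_rpow_mul_div_sub_one {p : ℝ} (hp : 1 < p) :
    p / (p - 1) ≤ ((1 + 1 / p) ^ (p + 1) * p) ^ (1 / p) * (p / (p - 1)) := by
  have hp0 : 0 < p := by linarith
  refine le_mul_of_one_le_left (div_nonneg hp0.le (by linarith)) ?_
  refine Real.one_le_rpow (one_le_mul_of_one_le_of_one_le ?_ hp.le) (by positivity)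
  exact Real.one_le_rpow (le_add_of_nonneg_right (by positivity)) (by linarith)

theorem sufficiency_finite_lattice_general {n : ℕ}
    (μ ν : Measure (Fin n → ℝ))
    (D : Finset (ℤ × (Fin n → ℤ)))
    (hμ : ∀ i ∈ D, μ (dyadicCube n i.1 i.2) < ∞)
    (p : ℝ) (hp : 1 < p)
    (a : ℤ × (Fin n → ℤ) → (Fin n → ℝ) → ℝ≥0∞) (ha : ∀ i, Measurable (a i))
    (B : ℝ≥0∞)
    (hTest : ∀ i ∈ D,
      (∫⁻ x, (maxOpP μ {j | j ∈ D ∧ dyadicCube n j.1 j.2 ⊆ dyadicCube n i.1 i.2} a p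
          ((dyadicCube n i.1 i.2).indicator 1) x) ^ p ∂ν) ^ (1 / p) ≤
        B * μ (dyadicCube n i.1 i.2) ^ (1 / p))
    (f : (Fin n → ℝ) → ℝ≥0∞) (hf : Measurable f)
    (hfLp : ∫⁻ x, f x ^ p ∂μ ≠ ∞) :
    (∫⁻ x, (maxOpP μ {j | j ∈ D} a p f x) ^ p ∂ν) ^ (1 / p) ≤
      ENNReal.ofReal (((1 + 1 / p) ^ (p + 1) * p) ^ (1 / p) * (p / (p - 1))) * B *
        (∫⁻ x, f x ^ p ∂μ) ^ (1 / p) := by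
  classical
  have hp0 : 0 < p := by linarith
  set Q := fun i : ℤ × (Fin n → ℤ) ↦ dyadicCube n i.1 i.2
  have hQ : ∀ i ∈ D, ∀ j ∈ D, Q i ⊆ Q j ∨ Q j ⊆ Q i ∨ Disjoint (Q i) (Q j) :=
    fun i _ j _ ↦ dyadicCube_subset_or_subset_or_disjoint n i j
  have hQm : ∀ i ∈ D, MeasurableSet (Q i) := fun i _ ↦ measurableSet_dyadicCube n i.1 i.2
  rw [Finset.setOfPred_mem, lintegral_maxOpP_rpow μ ν D (fun i _ ↦ ha i) hp0]
  calc (∑ i ∈ D, (∫⁻ z in Q i, f z ∂μ) ^ p * ∫⁻ x in Q i, a i x ^ p ∂ν) ^ (1 / p)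
      = (∑ i ∈ D, (μ (Q i) ^ p * ∫⁻ x in Q i, a i x ^ p ∂ν) * (⨍⁻ z in Q i, f z ∂μ) ^ p) ^
          (1 / p) := by
        refine congrArg (· ^ (1 / p)) (Finset.sum_congr rfl fun i hi ↦ ?_)
        rw [← measure_mul_setLAverage f (hμ i hi).ne, mul_rpow_of_nonneg _ _ hp0.le]
        ring
    _ ≤ (B ^ p * (ENNReal.ofReal (p / (p - 1)) ^ p * ∫⁻ x, f x ^ p ∂μ)) ^ (1 / p) := by
        gcongr
        refine (sum_mul_setLAverage_rpow_le hp0 hQ hQm fun i hi ↦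
          sum_measure_rpow_mul_le_of_testing (fun j _ ↦ ha j) hp0 (hTest i hi)).trans ?_
        gcongr
        exact lintegral_maximalAverage_rpow_le hp hQ hQm (fun i hi ↦ (hμ i hi).ne) hf hfLp
    _ = ENNReal.ofReal (p / (p - 1)) * B * (∫⁻ x, f x ^ p ∂μ) ^ (1 / p) := by
        rw [mul_rpow_of_nonneg _ _ (by positivity), mul_rpow_of_nonneg _ _ (by positivity),
          ← rpow_mul, ← rpow_mul, mul_one_div_cancel hp0.ne', rpow_one, rpow_one]
        ring
    _ ≤ _ := by gcongr; exact div_sub_one_le_rpow_mul_div_sub_one hp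

/-- Sufficiency in the main theorem for `q = p` and a finite lattice: the Sawyer-type
testing condition on all truncations implies the full two weight bound, with constant
`C(p) = ((1+1/p)^(p+1) p)^(1/p) p'`. -/
theorem sufficiency_finite_lattice {n : ℕ}
    (μ ν : Measure (Fin n → ℝ))
    (D : Finset (ℤ × (Fin n → ℤ)))
    (hμ : ∀ i ∈ D, μ (dyadicCube n i.1 i.2) < ∞)
    (hν : ∀ i ∈ D, ν (dyadicCube n i.1 i.2) < ∞)
    (p : ℝ) (hp : 1 < p)
    (a : ℤ × (Fin n → ℤ) → (Fin n → ℝ) → ℝ≥0∞) (ha : ∀ i, Measurable (a i))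
    (B : ℝ≥0∞)
    (hTest : ∀ i ∈ D,
      (∫⁻ x, (maxOpP μ {j | j ∈ D ∧ dyadicCube n j.1 j.2 ⊆ dyadicCube n i.1 i.2} a p
          ((dyadicCube n i.1 i.2).indicator 1) x) ^ p ∂ν) ^ (1 / p) ≤
        B * μ (dyadicCube n i.1 i.2) ^ (1 / p))
    (f : (Fin n → ℝ) → ℝ≥0∞) (hf : Measurable f)
    (hfLp : ∫⁻ x, f x ^ p ∂μ ≠ ∞) :
    (∫⁻ x, (maxOpP μ {j | j ∈ D} a p f x) ^ p ∂ν) ^ (1 / p) ≤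
      ENNReal.ofReal (((1 + 1 / p) ^ (p + 1) * p) ^ (1 / p) * (p / (p - 1))) * B *
        (∫⁻ x, f x ^ p ∂μ) ^ (1 / p) :=
  sufficiency_finite_lattice_general μ ν D hμ p hp a ha B hTest f hf hfLp
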